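/- arXiv:2502.03391 — 2 statements merged into one kernel-verified Lean document; each statement's English description precedes it below -/
import Mathlib

section
/- In the Max-Clique reduction, C ⊆ V is a clique in G if and only if S = V \ C is a baseline sufficient reason for the formula ψ at the all-False input with respect to the all-True baseline; i.e., the assignment that is False on S and True on V \ S satisfies ψ if and only if C = V \ S is a clique. -/
open Classical in
/-- C ⊆ V is a clique iff S = V \ C is a baseline sufficient reason for
ψ = ⋀_{(u,v)∉E, u≠v} (¬x_u ∨ ¬x_v) at the all-False input w.r.t. the all-True
baseline: the assignment that is False on S and True on V \ S satisfies ψ iff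
V \ S is a clique. -/
theorem baseline_sufficient_iff_clique {V : Type*} (G : SimpleGraph V) (S : Set V) :
    (∀ u v : V, u ≠ v → ¬ G.Adj u v →
        ((decide (u ∉ S) : Bool) = false ∨ (decide (v ∉ S) : Bool) = false)) ↔
      G.IsClique Sᶜ := by
  constructor
  · intro h u hu v hv huv
    by_contra hadj
    rcases h u v huv hadj with h1 | h1 <;> simp_all [Set.mem_compl_iff]
  · intro h u v huv hadj
    by_contra hc
    push_neg at hc
    obtain ⟨h1, h2⟩ := hc
    exact hadj (h (by simpa using h1) (by simpa using h2) huv)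
end

section
/- Implicant splitting preserves implicants of size ≤ k: let φ be a Boolean formula over variables X, let X_c ⊆ X, and let φ' = ⋀_{i=1}^{k+1} φ^{(i)} where each φ^{(i)} replaces every variable x_j ∈ X_c with a fresh copy x_j^{(i)}. Then a partial assignment C touching only variables outside X_c is an implicant of φ if and only if it (viewed as a partial assignment to the variables of φ') is an implicant of φ'. -/
/-- Implicant splitting preserves implicants of size ≤ k.
Variables: a type `X`; masked variables `Xc ⊆ X`. The split formula
φ' = ⋀_{i=1}^{k+1} φ^{(i)} has variable set `↥Xcᶜ ⊕ Fin (k+1) × ↥Xc`,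
where φ^{(i)} is φ with every x ∈ Xc renamed to its i-th copy.
A partial assignment with domain `D` disjoint from `Xc` and values `v`
is an implicant of φ iff it is an implicant of φ'. -/
theorem implicant_splitting {X : Type*} (Xc : Set X) [DecidablePred (· ∈ Xc)]
    (φ : (X → Bool) → Bool) (k : ℕ)
    (D : Set X) (hD : D ⊆ Xcᶜ) (v : X → Bool) :
    ((∀ a : X → Bool, (∀ x ∈ D, a x = v x) → φ a = true) ↔
      (∀ b : (↥Xcᶜ ⊕ Fin (k + 1) × ↥Xc) → Bool,
        (∀ x (hx : x ∈ D), b (Sum.inl ⟨x, hD hx⟩) = v x) →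
        ∀ i : Fin (k + 1),
          φ (fun y =>
            if h : y ∈ Xc then b (Sum.inr (i, ⟨y, h⟩))
            else b (Sum.inl ⟨y, h⟩)) = true)) := by
  constructor
  · intro H b hb i
    apply H
    intro x hx
    have hxc : x ∉ Xc := hD hx
    simp only [dif_neg hxc]
    exact hb x hx
  · intro H a ha
    have := H (fun s => Sum.elim (fun x => a x.1) (fun p => a p.2.1) s)
      (fun x hx => by simpa using ha x hx) ⟨0, Nat.succ_pos k⟩
    convert this using 2
    funext y
    by_cases h : y ∈ Xc <;> simp [h]
end
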